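/- arXiv:2605.20702 — 2 statements merged into one kernel-verified Lean document; each statement's English description precedes it below -/
import Mathlib

section
/- For every p ∈ (0, 1/2) there exists a constant C_p > 0 such that for all real numbers a and b with b ≠ 0, the integral over θ ∈ [0, 2π] of |a + b·cos θ|^{-p} dθ is at most C_p · |b|^{-p}. -/
/-!
Dividing by `b` reduces the claim to a bound on `∫ |c + cos θ| ^ (-p)` uniform in `c = a / b`.
With `θ₀ = arccos (-c)`, on `[0, π]` we have `|c + cos θ| ≥ |cos θ - cos θ₀| ≥ (2 / π²) (θ - θ₀)²`,
by Jordan's inequality `sin x ≥ 2x/π` in the product formula for `cos θ - cos θ₀`; on `[π, 2π]`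
the same holds around `2π - θ₀`. So the integrand is dominated by
`|θ - θ₀| ^ (-2p) + |θ - (2π - θ₀)| ^ (-2p)`, whose integral is bounded independently of `θ₀`
because `2p < 1`.
-/

open MeasureTheory Real Set

lemma sin_le_sin_of_le_of_le_pi_sub {u v : ℝ} (hu : 0 ≤ u) (huv : u ≤ v) (hv : v ≤ π - u) :
    sin u ≤ sin v := by
  rcases le_total v (π / 2) with h | h
  · exact sin_le_sin_of_le_of_le_pi_div_two (by linarith [pi_pos]) h huv
  · rw [← sin_pi_sub v]
    exact sin_le_sin_of_le_of_le_pi_div_two (by linarith [pi_pos]) (by linarith) (by linarith)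

lemma two_div_pi_sq_mul_sq_le_abs_cos_sub_cos {x y : ℝ} (hx : x ∈ Icc 0 π) (hy : y ∈ Icc 0 π) :
    2 / π ^ 2 * (x - y) ^ 2 ≤ |cos x - cos y| := by
  wlog hyx : y ≤ x generalizing x y
  · rw [abs_sub_comm, ← neg_sub y x, neg_sq]
    exact this hy hx (le_of_not_ge hyx)
  have hlin : 0 ≤ 2 / π * ((x - y) / 2) := mul_nonneg (by positivity) (by linarith)
  have hjordan : 2 / π * ((x - y) / 2) ≤ sin ((x - y) / 2) :=
    mul_le_sin (by linarith) (by linarith [hx.2, hy.1])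
  have hsin : sin ((x - y) / 2) ≤ sin ((x + y) / 2) :=
    sin_le_sin_of_le_of_le_pi_sub (by linarith) (by linarith [hy.1]) (by linarith [hx.2])
  have hcos : cos y - cos x = 2 * sin ((x + y) / 2) * sin ((x - y) / 2) := by
    rw [cos_sub_cos, show (y - x) / 2 = -((x - y) / 2) by ring, sin_neg, add_comm y x]
    ring
  calc 2 / π ^ 2 * (x - y) ^ 2 = 2 * (2 / π * ((x - y) / 2)) * (2 / π * ((x - y) / 2)) := by
        field_simp
    _ ≤ 2 * sin ((x + y) / 2) * sin ((x - y) / 2) :=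
        mul_le_mul (by linarith) hjordan hlin (by linarith)
    _ ≤ |cos x - cos y| := by rw [← hcos, abs_sub_comm]; exact le_abs_self _

-- `cos (arccos y)` is the point of `[-1, 1]` nearest to `y`.
lemma abs_sub_cos_arccos_le {x : ℝ} (hx : x ∈ Icc (-1) 1) (y : ℝ) :
    |x - cos (arccos y)| ≤ |x - y| := by
  rcases le_or_gt y (-1) with h | h
  · rw [arccos_of_le_neg_one h, cos_pi, abs_of_nonneg (by linarith [hx.1]),
      abs_of_nonneg (by linarith [hx.1])]
    linarith
  rcases le_or_gt 1 y with h' | h'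
  · rw [arccos_of_one_le h', cos_zero, abs_of_nonpos (by linarith [hx.2]),
      abs_of_nonpos (by linarith [hx.2])]
    linarith
  · rw [cos_arccos h.le h'.le]

lemma two_div_pi_sq_mul_sq_le_abs_add_cos {c θ : ℝ} (hθ : θ ∈ Icc 0 (2 * π)) :
    2 / π ^ 2 * (θ - arccos (-c)) ^ 2 ≤ |c + cos θ| ∨
      2 / π ^ 2 * (θ - (2 * π - arccos (-c))) ^ 2 ≤ |c + cos θ| := by
  have key : ∀ φ ∈ Icc 0 π, cos φ = cos θ → 2 / π ^ 2 * (φ - arccos (-c)) ^ 2 ≤ |c + cos θ| := by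
    intro φ hφ hcos
    refine (two_div_pi_sq_mul_sq_le_abs_cos_sub_cos hφ ⟨arccos_nonneg _, arccos_le_pi _⟩).trans ?_
    rw [hcos, add_comm, ← sub_neg_eq_add]
    exact abs_sub_cos_arccos_le ⟨neg_one_le_cos θ, cos_le_one θ⟩ _
  rcases le_total θ π with h | h
  · exact .inl (key θ ⟨hθ.1, h⟩ rfl)
  · right
    convert key (2 * π - θ) ⟨by linarith [hθ.2], by linarith⟩ (cos_two_pi_sub θ) using 2
    ring

lemma rpow_neg_le_of_mul_sq_le {m x y p : ℝ} (hm : 0 < m) (hx : x ≠ 0) (hp : 0 ≤ p)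
    (h : m * x ^ 2 ≤ y) : y ^ (-p) ≤ m ^ (-p) * |x| ^ (-(2 * p)) :=
  calc y ^ (-p) ≤ (m * x ^ 2) ^ (-p) := rpow_le_rpow_of_nonpos (by positivity) h (by linarith)
    _ = m ^ (-p) * |x| ^ (-(2 * p)) := by
      rw [mul_rpow hm.le (sq_nonneg x), ← sq_abs, ← rpow_natCast, ← rpow_mul (abs_nonneg x)]
      push_cast
      ring_nf

lemma abs_add_cos_rpow_neg_le {p c θ : ℝ} (hp : 0 ≤ p) (hθ : θ ∈ Icc 0 (2 * π))
    (h₀ : θ ≠ arccos (-c)) (h₁ : θ ≠ 2 * π - arccos (-c)) :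
    |c + cos θ| ^ (-p) ≤ (2 / π ^ 2) ^ (-p) *
      (|θ - arccos (-c)| ^ (-(2 * p)) + |θ - (2 * π - arccos (-c))| ^ (-(2 * p))) := by
  have hm : (0 : ℝ) < 2 / π ^ 2 := by positivity
  have hterm : ∀ t, 0 ≤ (2 / π ^ 2) ^ (-p) * |θ - t| ^ (-(2 * p)) := fun t => by positivity
  rw [mul_add]
  rcases two_div_pi_sq_mul_sq_le_abs_add_cos (c := c) hθ with h | h
  · exact (rpow_neg_le_of_mul_sq_le hm (sub_ne_zero.2 h₀) hp h).trans
      (le_add_of_nonneg_right (hterm _))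
  · exact (rpow_neg_le_of_mul_sq_le hm (sub_ne_zero.2 h₁) hp h).trans
      (le_add_of_nonneg_left (hterm _))

lemma intervalIntegrable_abs_rpow {r : ℝ} (hr : -1 < r) (a b : ℝ) :
    IntervalIntegrable (fun x => |x| ^ r) volume a b := by
  have hloc : LocallyIntegrable (fun x : ℝ => |x| ^ r) :=
    locallyIntegrable_of_norm_le_rpow (by simp) (C := 1) (α := -r) (by simp; linarith)
      (ae_of_all _ fun x => by simp [abs_of_nonneg (rpow_nonneg (abs_nonneg x) r)])
      (continuous_abs.measurable.pow_const r).aestronglyMeasurable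
  exact (hloc.integrableOn_isCompact isCompact_uIcc).intervalIntegrable

lemma integrableOn_Icc_abs_sub_rpow {r : ℝ} (hr : -1 < r) (t : ℝ) {a b : ℝ} (hab : a ≤ b) :
    IntegrableOn (fun θ => |θ - t| ^ r) (Icc a b) := by
  rw [← intervalIntegrable_iff_integrableOn_Icc_of_le hab]
  simpa using (intervalIntegrable_abs_rpow hr (a - t) (b - t)).comp_sub_right t

lemma setIntegral_Icc_abs_sub_rpow_le {r L t : ℝ} (hr : -1 < r) (ht : t ∈ Icc 0 L) :
    ∫ θ in Icc 0 L, |θ - t| ^ r ≤ ∫ u in -L..L, |u| ^ r := by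
  have hL : 0 ≤ L := ht.1.trans ht.2
  rw [integral_Icc_eq_integral_Ioc, ← intervalIntegral.integral_of_le hL,
    intervalIntegral.integral_comp_sub_right (fun u => |u| ^ r) t]
  exact intervalIntegral.integral_mono_interval (by linarith [ht.2]) (by linarith)
    (by linarith [ht.1]) (ae_of_all _ fun _ => by positivity) (intervalIntegrable_abs_rpow hr _ _)

lemma integral_abs_add_cos_rpow_neg_le {p : ℝ} (hp : 0 ≤ p) (hp' : p < 1 / 2) (c : ℝ) :
    ∫ θ in Icc 0 (2 * π), |c + cos θ| ^ (-p) ≤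
      2 * (2 / π ^ 2) ^ (-p) * ∫ u in -(2 * π)..2 * π, |u| ^ (-(2 * p)) := by
  set t₀ := arccos (-c)
  set K := (2 / π ^ 2) ^ (-p)
  set I := ∫ u in -(2 * π)..2 * π, |u| ^ (-(2 * p))
  have hr : -1 < -(2 * p) := by linarith
  have ht₀ : t₀ ∈ Icc 0 (2 * π) := ⟨arccos_nonneg _, by linarith [arccos_le_pi (-c), pi_pos]⟩
  have ht₁ : 2 * π - t₀ ∈ Icc 0 (2 * π) :=
    ⟨by linarith [arccos_le_pi (-c), pi_pos], by linarith [arccos_nonneg (-c)]⟩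
  have hint : ∀ t, IntegrableOn (fun θ => |θ - t| ^ (-(2 * p))) (Icc 0 (2 * π)) :=
    fun t => integrableOn_Icc_abs_sub_rpow hr t (by positivity)
  calc ∫ θ in Icc 0 (2 * π), |c + cos θ| ^ (-p)
      ≤ ∫ θ in Icc 0 (2 * π), K * (|θ - t₀| ^ (-(2 * p)) + |θ - (2 * π - t₀)| ^ (-(2 * p))) := by
        refine integral_mono_of_nonneg (ae_of_all _ fun _ => by positivity)
          (((hint _).add (hint _)).const_mul K) ?_
        filter_upwards [ae_restrict_mem measurableSet_Icc, ae_restrict_of_ae (volume.ae_ne t₀),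
          ae_restrict_of_ae (volume.ae_ne (2 * π - t₀))] with θ hθ h₀ h₁
        exact abs_add_cos_rpow_neg_le hp hθ h₀ h₁
    _ = K * ((∫ θ in Icc 0 (2 * π), |θ - t₀| ^ (-(2 * p))) +
          ∫ θ in Icc 0 (2 * π), |θ - (2 * π - t₀)| ^ (-(2 * p))) := by
        rw [integral_const_mul, integral_add (hint _) (hint _)]
    _ ≤ K * (I + I) := by
        gcongr
        exacts [setIntegral_Icc_abs_sub_rpow_le hr ht₀, setIntegral_Icc_abs_sub_rpow_le hr ht₁]
    _ = 2 * K * I := by ring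

/-- For every `p ∈ (0, 1/2)` there is a constant `C_p > 0` such that for all `a b : ℝ`
with `b ≠ 0`, `∫_{0}^{2π} |a + b cos θ|^{-p} dθ ≤ C_p |b|^{-p}`. -/
theorem stmt_0 :
    ∀ p : ℝ, 0 < p → p < 1 / 2 →
      ∃ C : ℝ, 0 < C ∧ ∀ a b : ℝ, b ≠ 0 →
        (∫ θ in Set.Icc (0 : ℝ) (2 * π), |a + b * Real.cos θ| ^ (-p)) ≤ C * |b| ^ (-p) := by
  intro p hp hp'
  set M := 2 * (2 / π ^ 2) ^ (-p) * ∫ u in -(2 * π)..2 * π, |u| ^ (-(2 * p))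
  have hM : 0 ≤ M := mul_nonneg (by positivity)
    (intervalIntegral.integral_nonneg (by linarith [pi_pos]) fun _ _ => by positivity)
  refine ⟨M + 1, by linarith, fun a b hb => ?_⟩
  have hscale : ∀ θ, |a + b * cos θ| ^ (-p) = |b| ^ (-p) * |a / b + cos θ| ^ (-p) := fun θ => by
    rw [← mul_rpow (abs_nonneg _) (abs_nonneg _), ← abs_mul, mul_add, mul_div_cancel₀ a hb]
  calc ∫ θ in Icc 0 (2 * π), |a + b * cos θ| ^ (-p)
      = |b| ^ (-p) * ∫ θ in Icc 0 (2 * π), |a / b + cos θ| ^ (-p) := by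
        simp_rw [hscale]
        exact integral_const_mul _ _
    _ ≤ |b| ^ (-p) * (M + 1) := by
        gcongr
        linarith [integral_abs_add_cos_rpow_neg_le hp.le hp' (a / b)]
    _ = (M + 1) * |b| ^ (-p) := mul_comm _ _
end

section
/- Fix p ∈ (0, 1/2). There exist K₀ > 0 and γ' ∈ (0, 1/2) such that for all K ≥ K₀, all x ∈ 𝕋², and all unit vectors v ∈ ℝ², the expectation over (θ₁, θ₂) uniformly distributed on [0,2π)² of ‖J(θ₂)·J(θ₁)·v‖^{-p} is at most γ', where J(θ) is the matrix with rows (1, K cos θ) and (1, 1 + K cos θ). -/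
/-!
For `w = J(θ₁) v` the first coordinate of `J(θ₂) w` is `w₀ + K w₁ cos θ₂`, and
`w₁ = (v₀ + v₁) + K v₁ cos θ₁`. Both integrations are therefore instances of the estimate
`∫₀^{2π} |α + β cos θ|^{-p} dθ ≤ C max(|α|, |β|)^{-p}`, valid for `p < 1/2`: the inner one gives
`C (K |w₁|)^{-p}`, and since `max(|v₀ + v₁|, K |v₁|) ≥ 1/2` for a unit vector and `K ≥ 2`, the
outer one gives `2 C² K^{-p}`, which is small for large `K`.

For the estimate: if `|α| ≤ |β|`, write `α = -β cos θ₀`, so that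
`α + β cos θ = -2β sin((θ + θ₀)/2) sin((θ - θ₀)/2)`, and AM-GM splits the `-p`-th power of the
product into two translates of `|sin(θ/2)|^{-2p}`. If `|β| ≤ |α|`, then
`|α + β cos θ| ≥ |α| min(1 - cos θ, 1 + cos θ) = 2|α| min(sin²(θ/2), cos²(θ/2))`, again two
translates. Jordan's inequality makes `|sin(θ/2)|^{-2p}` integrable since `2p < 1`, and by
periodicity every translate has the same integral over a period.
-/

open Real MeasureTheory

/-- The one-step Jacobian `J(θ)` of the randomized Chirikov map. -/
noncomputable def chirikovJac (K θ : ℝ) : Matrix (Fin 2) (Fin 2) ℝ :=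
  !![1, K * Real.cos θ; 1, 1 + K * Real.cos θ]

open Set
open scoped Matrix

noncomputable def sinHalfRpowIntegral (q : ℝ) : ℝ :=
  ∫ θ in (0)..2 * π, |sin (θ / 2)| ^ (-q)

lemma sinHalfRpowIntegral_nonneg (q : ℝ) : 0 ≤ sinHalfRpowIntegral q :=
  intervalIntegral.integral_nonneg two_pi_pos.le fun _ _ => rpow_nonneg (abs_nonneg _) _

lemma periodic_abs_sin_half_rpow (r : ℝ) :
    Function.Periodic (fun θ : ℝ => |sin (θ / 2)| ^ r) (2 * π) := by
  intro θ
  simp only [add_div, mul_div_cancel_left₀ π two_ne_zero, sin_add_pi, abs_neg]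

lemma abs_sin_half_rpow_neg_le {q : ℝ} (hq : 0 < q) {θ : ℝ} (hθ : |θ| ≤ π) :
    |sin (θ / 2)| ^ (-q) ≤ π ^ q * |θ| ^ (-q) := by
  rcases eq_or_ne θ 0 with rfl | hθ0
  · simp [zero_rpow (neg_ne_zero.2 hq.ne')]
  have hjordan : |θ| / π ≤ |sin (θ / 2)| := by
    have := mul_abs_le_abs_sin (x := θ / 2) (by rw [abs_div, abs_two]; linarith)
    rwa [abs_div, abs_two, show 2 / π * (|θ| / 2) = |θ| / π by ring] at this
  calc |sin (θ / 2)| ^ (-q) ≤ (|θ| / π) ^ (-q) :=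
        rpow_le_rpow_of_nonpos (by positivity) hjordan (by linarith)
    _ = π ^ q * |θ| ^ (-q) := by
        rw [div_rpow (abs_nonneg θ) pi_pos.le, rpow_neg pi_pos.le, div_inv_eq_mul, mul_comm]

lemma intervalIntegrable_abs_sin_half_rpow_neg {q : ℝ} (hq0 : 0 < q) (hq1 : q < 1) (a b : ℝ) :
    IntervalIntegrable (fun θ : ℝ => |sin (θ / 2)| ^ (-q)) volume a b := by
  refine (periodic_abs_sin_half_rpow (-q)).intervalIntegrable two_pi_pos.ne' (t := -π) ?_ a b
  rw [show -π + 2 * π = π by ring,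
    intervalIntegrable_iff_integrableOn_Ioo_of_le (by linarith [pi_pos]),
    show Ioo (-π) π = Metric.ball (0 : ℝ) π by simp [Real.ball_eq_Ioo]]
  refine integrableOn_ball_of_norm_le_rpow (C := π ^ q) (by simp) (by simpa using hq1) ?_
    (by fun_prop : Measurable fun θ : ℝ => |sin (θ / 2)| ^ (-q)).aestronglyMeasurable
  rw [ae_restrict_iff' Metric.isOpen_ball.measurableSet]
  refine ae_of_all _ fun θ hθ => ?_
  rw [norm_of_nonneg (by positivity), norm_eq_abs]
  exact abs_sin_half_rpow_neg_le hq0 (mem_ball_zero_iff.1 hθ).le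

lemma integrableOn_abs_sin_sub_half_rpow_neg {q : ℝ} (hq0 : 0 < q) (hq1 : q < 1) (c : ℝ) :
    IntegrableOn (fun θ : ℝ => |sin ((θ - c) / 2)| ^ (-q)) (Icc 0 (2 * π)) := by
  rw [← intervalIntegrable_iff_integrableOn_Icc_of_le two_pi_pos.le]
  simpa using (intervalIntegrable_abs_sin_half_rpow_neg hq0 hq1 (-c) (2 * π - c)).comp_sub_right c

lemma setIntegral_abs_sin_sub_half_rpow_neg (q c : ℝ) :
    ∫ θ in Icc 0 (2 * π), |sin ((θ - c) / 2)| ^ (-q) = sinHalfRpowIntegral q := by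
  rw [integral_Icc_eq_integral_Ioc, ← intervalIntegral.integral_of_le two_pi_pos.le,
    intervalIntegral.integral_comp_sub_right (fun θ => |sin (θ / 2)| ^ (-q)), zero_sub,
    sub_eq_neg_add, (periodic_abs_sin_half_rpow (-q)).intervalIntegral_add_eq (-c) 0, zero_add,
    sinHalfRpowIntegral]

lemma countable_setOf_cos_eq (x : ℝ) : {θ : ℝ | cos θ = cos x}.Countable := by
  refine (countable_iUnion fun k : ℤ => (toFinite {2 * k * π + x, 2 * k * π - x}).countable).mono ?_
  intro θ hθ
  obtain ⟨k, hk⟩ := cos_eq_cos_iff.1 (Eq.symm hθ)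
  exact mem_iUnion.2 ⟨k, hk⟩

lemma ae_add_mul_cos_ne_zero {α β : ℝ} (h : α ≠ 0 ∨ β ≠ 0) : ∀ᵐ θ : ℝ, α + β * cos θ ≠ 0 := by
  rcases eq_or_ne β 0 with rfl | hβ
  · simpa using h
  by_cases hroot : ∃ x, α + β * cos x = 0
  · obtain ⟨x, hx⟩ := hroot
    filter_upwards [(countable_setOf_cos_eq x).ae_notMem volume] with θ hθ hθx
    exact hθ (mul_left_cancel₀ hβ (by linarith))
  · exact ae_of_all _ (not_exists.1 hroot)

lemma mul_rpow_neg_le_add_div_two {s t : ℝ} (hs : 0 ≤ s) (ht : 0 ≤ t) (p : ℝ) :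
    (s * t) ^ (-p) ≤ (s ^ (-(2 * p)) + t ^ (-(2 * p))) / 2 := by
  have hsq : ∀ {x : ℝ}, 0 ≤ x → x ^ (-(2 * p)) = (x ^ (-p)) ^ 2 := fun hx => by
    rw [← rpow_natCast, ← rpow_mul hx]; ring_nf
  rw [mul_rpow hs ht, hsq hs, hsq ht]
  nlinarith [sq_nonneg (s ^ (-p) - t ^ (-p))]

lemma min_rpow_le_add {s t : ℝ} (hs : 0 ≤ s) (ht : 0 ≤ t) (r : ℝ) :
    min s t ^ r ≤ s ^ r + t ^ r := by
  rcases min_cases s t with ⟨h, _⟩ | ⟨h, _⟩ <;> rw [h]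
  · exact le_add_of_nonneg_right (rpow_nonneg ht r)
  · exact le_add_of_nonneg_left (rpow_nonneg hs r)

lemma two_mul_sq_rpow_neg_le {p : ℝ} (hp : 0 ≤ p) (x : ℝ) :
    (2 * x ^ 2) ^ (-p) ≤ |x| ^ (-(2 * p)) := by
  have h2 : (2 : ℝ) ^ (-p) ≤ 1 := rpow_le_one_of_one_le_of_nonpos one_le_two (by linarith)
  rw [mul_rpow zero_le_two (sq_nonneg x), ← sq_abs, ← rpow_natCast, ← rpow_mul (abs_nonneg x)]
  norm_num
  exact mul_le_of_le_one_left (rpow_nonneg (abs_nonneg x) _) h2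

lemma abs_add_mul_cos_eq_of_root {α β θ₀ : ℝ} (hroot : α + β * cos θ₀ = 0) (θ : ℝ) :
    |α + β * cos θ| = 2 * |β| * (|sin ((θ + θ₀) / 2)| * |sin ((θ - θ₀) / 2)|) := by
  have : α + β * cos θ = -(2 * β * (sin ((θ + θ₀) / 2) * sin ((θ - θ₀) / 2))) := by
    linear_combination hroot + β * cos_sub_cos θ θ₀
  rw [this, abs_neg, abs_mul, abs_mul, abs_mul, abs_two]

lemma abs_add_mul_cos_rpow_neg_le_of_root {p α β θ₀ : ℝ} (hp : 0 ≤ p)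
    (hroot : α + β * cos θ₀ = 0) (θ : ℝ) :
    |α + β * cos θ| ^ (-p) ≤
      |β| ^ (-p) * (|sin ((θ + θ₀) / 2)| ^ (-(2 * p)) + |sin ((θ - θ₀) / 2)| ^ (-(2 * p))) := by
  have h2 : (2 : ℝ) ^ (-p) ≤ 1 := rpow_le_one_of_one_le_of_nonpos one_le_two (by linarith)
  have hamgm := mul_rpow_neg_le_add_div_two (abs_nonneg (sin ((θ + θ₀) / 2)))
    (abs_nonneg (sin ((θ - θ₀) / 2))) p
  rw [abs_add_mul_cos_eq_of_root hroot, mul_rpow (by positivity) (by positivity),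
    mul_rpow zero_le_two (abs_nonneg β)]
  have hβ := rpow_nonneg (abs_nonneg β) (-p)
  have hst := rpow_nonneg (mul_nonneg (abs_nonneg (sin ((θ + θ₀) / 2)))
    (abs_nonneg (sin ((θ - θ₀) / 2)))) (-p)
  have hA := rpow_nonneg (abs_nonneg (sin ((θ + θ₀) / 2))) (-(2 * p))
  have hB := rpow_nonneg (abs_nonneg (sin ((θ - θ₀) / 2))) (-(2 * p))
  nlinarith [mul_nonneg hβ hst, mul_le_mul_of_nonneg_left hamgm hβ]

-- Where `cos θ = ±1` the right side contains the junk value `0 ^ (-(2 * p)) = 0`.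
lemma abs_add_mul_cos_rpow_neg_le_of_abs_le {p α β θ : ℝ} (hp : 0 < p) (hβα : |β| ≤ |α|)
    (h1 : cos θ ≠ 1) (h2 : cos θ ≠ -1) :
    |α + β * cos θ| ^ (-p) ≤
      |α| ^ (-p) * (|sin (θ / 2)| ^ (-(2 * p)) + |cos (θ / 2)| ^ (-(2 * p))) := by
  rcases eq_or_ne α 0 with rfl | hα
  · simp_all [zero_rpow (neg_ne_zero.2 hp.ne')]
  have hsin : 1 - cos θ = 2 * sin (θ / 2) ^ 2 := by
    have := cos_sq (θ / 2)
    rw [show 2 * (θ / 2) = θ by ring] at this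
    nlinarith [sin_sq_add_cos_sq (θ / 2)]
  have hcos : 1 + cos θ = 2 * cos (θ / 2) ^ 2 := by
    have := cos_sq (θ / 2)
    rw [show 2 * (θ / 2) = θ by ring] at this
    linarith
  have hsub : 0 < 1 - cos θ := by linarith [lt_of_le_of_ne (cos_le_one θ) h1]
  have hadd : 0 < 1 + cos θ := by linarith [lt_of_le_of_ne (neg_one_le_cos θ) (Ne.symm h2)]
  set m := min (1 - cos θ) (1 + cos θ)
  have hm0 : 0 < m := lt_min hsub hadd
  have hm : m ≤ 1 - |cos θ| := by
    rcases abs_cases (cos θ) with ⟨h, _⟩ | ⟨h, _⟩ <;> rw [h]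
    · exact min_le_left _ _
    · rw [sub_neg_eq_add]; exact min_le_right _ _
  have hlow : |α| * m ≤ |α + β * cos θ| := calc
    |α| * m ≤ |α| - |α| * |cos θ| := by nlinarith [abs_nonneg α]
    _ ≤ |α| - |β * cos θ| := by rw [abs_mul]; gcongr
    _ ≤ |α + β * cos θ| := by simpa using abs_sub_abs_le_abs_add α (β * cos θ)
  calc |α + β * cos θ| ^ (-p) ≤ (|α| * m) ^ (-p) :=
        rpow_le_rpow_of_nonpos (by positivity) hlow (by linarith)
    _ = |α| ^ (-p) * m ^ (-p) := mul_rpow (abs_nonneg α) hm0.le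
    _ ≤ |α| ^ (-p) * (|sin (θ / 2)| ^ (-(2 * p)) + |cos (θ / 2)| ^ (-(2 * p))) := by
        gcongr
        refine (min_rpow_le_add hsub.le hadd.le _).trans ?_
        rw [hsin, hcos]
        exact add_le_add (two_mul_sq_rpow_neg_le hp.le _) (two_mul_sq_rpow_neg_le hp.le _)

lemma exists_add_mul_cos_eq_zero {α β : ℝ} (h : |α| ≤ |β|) : ∃ θ₀, α + β * cos θ₀ = 0 := by
  rcases eq_or_ne β 0 with rfl | hβ
  · exact ⟨0, by simpa using h⟩
  have hle : |-α / β| ≤ 1 := by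
    rwa [abs_div, abs_neg, div_le_one (abs_pos.2 hβ)]
  refine ⟨arccos (-α / β), ?_⟩
  rw [cos_arccos (abs_le.1 hle).1 (abs_le.1 hle).2]
  field_simp
  ring

lemma exists_ae_abs_add_mul_cos_rpow_neg_le {p : ℝ} (hp : 0 < p) (α β : ℝ) :
    ∃ c₁ c₂ : ℝ, ∀ᵐ θ : ℝ, |α + β * cos θ| ^ (-p) ≤ max |α| |β| ^ (-p) *
      (|sin ((θ - c₁) / 2)| ^ (-(2 * p)) + |sin ((θ - c₂) / 2)| ^ (-(2 * p))) := by
  rcases le_total |α| |β| with h | h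
  · obtain ⟨θ₀, hroot⟩ := exists_add_mul_cos_eq_zero h
    refine ⟨-θ₀, θ₀, ae_of_all _ fun θ => ?_⟩
    rw [max_eq_right h, sub_neg_eq_add]
    exact abs_add_mul_cos_rpow_neg_le_of_root hp.le hroot θ
  · refine ⟨0, -π, ?_⟩
    filter_upwards [(countable_setOf_cos_eq 0).ae_notMem volume,
      (countable_setOf_cos_eq π).ae_notMem volume] with θ h1 h2
    rw [max_eq_left h, sub_zero, sub_neg_eq_add, add_div, sin_add_pi_div_two]
    exact abs_add_mul_cos_rpow_neg_le_of_abs_le hp h (by simpa using h1) (by simpa using h2)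

lemma integrableOn_abs_add_mul_cos_rpow_neg {p : ℝ} (hp0 : 0 < p) (hp : p < 1 / 2) (α β : ℝ) :
    IntegrableOn (fun θ => |α + β * cos θ| ^ (-p)) (Icc 0 (2 * π)) := by
  obtain ⟨c₁, c₂, hle⟩ := exists_ae_abs_add_mul_cos_rpow_neg_le hp0 α β
  have hS := integrableOn_abs_sin_sub_half_rpow_neg (q := 2 * p) (by linarith) (by linarith)
  refine (((hS c₁).add (hS c₂)).const_mul (max |α| |β| ^ (-p))).mono'
    (by fun_prop : Measurable fun θ => |α + β * cos θ| ^ (-p)).aestronglyMeasurable ?_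
  filter_upwards [ae_restrict_of_ae hle] with θ hθ
  rwa [norm_of_nonneg (rpow_nonneg (abs_nonneg _) _)]

lemma setIntegral_abs_add_mul_cos_rpow_neg_le {p : ℝ} (hp0 : 0 < p) (hp : p < 1 / 2) (α β : ℝ) :
    ∫ θ in Icc 0 (2 * π), |α + β * cos θ| ^ (-p) ≤
      2 * sinHalfRpowIntegral (2 * p) * max |α| |β| ^ (-p) := by
  obtain ⟨c₁, c₂, hle⟩ := exists_ae_abs_add_mul_cos_rpow_neg_le hp0 α β
  have hS := integrableOn_abs_sin_sub_half_rpow_neg (q := 2 * p) (by linarith) (by linarith)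
  calc ∫ θ in Icc 0 (2 * π), |α + β * cos θ| ^ (-p)
      ≤ ∫ θ in Icc 0 (2 * π), max |α| |β| ^ (-p) *
          (|sin ((θ - c₁) / 2)| ^ (-(2 * p)) + |sin ((θ - c₂) / 2)| ^ (-(2 * p))) :=
        integral_mono_of_nonneg (ae_of_all _ fun θ => rpow_nonneg (abs_nonneg _) _)
          (((hS c₁).add (hS c₂)).const_mul _) (ae_restrict_of_ae hle)
    _ = 2 * sinHalfRpowIntegral (2 * p) * max |α| |β| ^ (-p) := by
        rw [integral_const_mul, integral_add (hS c₁) (hS c₂),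
          setIntegral_abs_sin_sub_half_rpow_neg, setIntegral_abs_sin_sub_half_rpow_neg]
        ring

lemma chirikovJac_mulVec_zero (K θ : ℝ) (w : Fin 2 → ℝ) :
    (chirikovJac K θ *ᵥ w) 0 = w 0 + K * w 1 * cos θ := by
  simp only [chirikovJac, Matrix.mulVec, dotProduct, Matrix.of_apply, Matrix.cons_val',
    Matrix.cons_val_fin_one, Matrix.cons_val_zero, Matrix.cons_val_one, Fin.sum_univ_two]
  ring

lemma chirikovJac_mulVec_one (K θ : ℝ) (w : Fin 2 → ℝ) :
    (chirikovJac K θ *ᵥ w) 1 = (w 0 + w 1) + K * w 1 * cos θ := by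
  simp only [chirikovJac, Matrix.mulVec, dotProduct, Matrix.of_apply, Matrix.cons_val',
    Matrix.cons_val_fin_one, Matrix.cons_val_zero, Matrix.cons_val_one, Fin.sum_univ_two]
  ring

lemma sqrt_sq_add_sq_rpow_neg_le {p a : ℝ} (hp : 0 ≤ p) (ha : a ≠ 0) (b : ℝ) :
    √(a ^ 2 + b ^ 2) ^ (-p) ≤ |a| ^ (-p) := by
  refine rpow_le_rpow_of_nonpos (abs_pos.2 ha) ?_ (by linarith)
  rw [← sqrt_sq_eq_abs]
  exact sqrt_le_sqrt (le_add_of_nonneg_right (sq_nonneg b))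

lemma half_le_max_abs_add_abs_mul {K a b : ℝ} (hK : 2 ≤ K) (hab : a ^ 2 + b ^ 2 = 1) :
    1 / 2 ≤ max |a + b| |K * b| := by
  by_contra! h
  obtain ⟨hsum, hKb⟩ := max_lt_iff.1 h
  have hb : |b| < 1 / 4 := by
    rw [abs_mul, abs_of_pos (by linarith : 0 < K)] at hKb
    nlinarith [abs_nonneg b]
  have ha : |a| < 3 / 4 := by
    have := abs_add_le (a + b) (-b)
    rw [add_neg_cancel_right, abs_neg] at this
    linarith
  nlinarith [sq_abs a, sq_abs b, abs_nonneg a, abs_nonneg b]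

lemma setIntegral_rpow_neg_norm_chirikovJac_mulVec_le {p K : ℝ} (hp0 : 0 < p) (hp : p < 1 / 2)
    (hK : 0 < K) {w : Fin 2 → ℝ} (hw : w 1 ≠ 0) :
    ∫ θ in Icc 0 (2 * π), √((chirikovJac K θ *ᵥ w) 0 ^ 2 + (chirikovJac K θ *ᵥ w) 1 ^ 2) ^ (-p) ≤
      2 * sinHalfRpowIntegral (2 * p) * (K * |w 1|) ^ (-p) := by
  have hKw : K * w 1 ≠ 0 := mul_ne_zero hK.ne' hw
  calc ∫ θ in Icc 0 (2 * π), √((chirikovJac K θ *ᵥ w) 0 ^ 2 + (chirikovJac K θ *ᵥ w) 1 ^ 2) ^ (-p)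
      ≤ ∫ θ in Icc 0 (2 * π), |w 0 + K * w 1 * cos θ| ^ (-p) := by
        refine integral_mono_of_nonneg (ae_of_all _ fun θ => rpow_nonneg (sqrt_nonneg _) _)
          (integrableOn_abs_add_mul_cos_rpow_neg hp0 hp _ _) ?_
        filter_upwards [ae_restrict_of_ae (ae_add_mul_cos_ne_zero (Or.inr hKw))] with θ hθ
        rw [chirikovJac_mulVec_zero]
        exact sqrt_sq_add_sq_rpow_neg_le hp0.le hθ _
    _ ≤ 2 * sinHalfRpowIntegral (2 * p) * max |w 0| |K * w 1| ^ (-p) :=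
        setIntegral_abs_add_mul_cos_rpow_neg_le hp0 hp _ _
    _ ≤ 2 * sinHalfRpowIntegral (2 * p) * (K * |w 1|) ^ (-p) := by
        refine mul_le_mul_of_nonneg_left (rpow_le_rpow_of_nonpos (mul_pos hK (abs_pos.2 hw)) ?_
          (by linarith)) (mul_nonneg zero_le_two (sinHalfRpowIntegral_nonneg _))
        rw [abs_mul, abs_of_pos hK]
        exact le_max_right _ _

lemma setIntegral_setIntegral_rpow_neg_norm_chirikovJac_le {p K : ℝ} (hp0 : 0 < p)
    (hp : p < 1 / 2) (hK : 2 ≤ K) {v : Fin 2 → ℝ} (hv : v 0 ^ 2 + v 1 ^ 2 = 1) :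
    ∫ θ₁ in Icc 0 (2 * π), ∫ θ₂ in Icc 0 (2 * π),
        √((chirikovJac K θ₂ *ᵥ (chirikovJac K θ₁ *ᵥ v)) 0 ^ 2 +
          (chirikovJac K θ₂ *ᵥ (chirikovJac K θ₁ *ᵥ v)) 1 ^ 2) ^ (-p) ≤
      2 * (2 * sinHalfRpowIntegral (2 * p)) ^ 2 * K ^ (-p) := by
  set C := 2 * sinHalfRpowIntegral (2 * p)
  have hC : 0 ≤ C := mul_nonneg zero_le_two (sinHalfRpowIntegral_nonneg _)
  have hK0 : 0 < K := by linarith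
  have hmax := half_le_max_abs_add_abs_mul hK hv
  have hroot : v 0 + v 1 ≠ 0 ∨ K * v 1 ≠ 0 := by
    rcases lt_max_iff.1 (by linarith : (0 : ℝ) < max |v 0 + v 1| |K * v 1|) with h | h
    exacts [Or.inl (abs_pos.1 h), Or.inr (abs_pos.1 h)]
  have hmax_rpow : max |v 0 + v 1| |K * v 1| ^ (-p) ≤ 2 := calc
    max |v 0 + v 1| |K * v 1| ^ (-p) ≤ (1 / 2) ^ (-p) :=
      rpow_le_rpow_of_nonpos (by norm_num) hmax (by linarith)
    _ = 2 ^ p := by rw [one_div, inv_rpow zero_le_two, rpow_neg zero_le_two, inv_inv]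
    _ ≤ 2 := by simpa using rpow_le_rpow_of_exponent_le one_le_two (by linarith : p ≤ 1)
  calc ∫ θ₁ in Icc 0 (2 * π), ∫ θ₂ in Icc 0 (2 * π),
        √((chirikovJac K θ₂ *ᵥ (chirikovJac K θ₁ *ᵥ v)) 0 ^ 2 +
          (chirikovJac K θ₂ *ᵥ (chirikovJac K θ₁ *ᵥ v)) 1 ^ 2) ^ (-p)
      ≤ ∫ θ₁ in Icc 0 (2 * π), C * K ^ (-p) * |v 0 + v 1 + K * v 1 * cos θ₁| ^ (-p) := by
        refine integral_mono_of_nonneg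
          (ae_of_all _ fun θ₁ => integral_nonneg fun θ₂ => rpow_nonneg (sqrt_nonneg _) _)
          ((integrableOn_abs_add_mul_cos_rpow_neg hp0 hp _ _).const_mul _) ?_
        filter_upwards [ae_restrict_of_ae (ae_add_mul_cos_ne_zero hroot)] with θ₁ hθ₁
        have := setIntegral_rpow_neg_norm_chirikovJac_mulVec_le hp0 hp hK0
          (w := chirikovJac K θ₁ *ᵥ v) (by rwa [chirikovJac_mulVec_one])
        rwa [chirikovJac_mulVec_one, mul_rpow hK0.le (abs_nonneg _), ← mul_assoc] at this
    _ = C * K ^ (-p) * ∫ θ₁ in Icc 0 (2 * π), |v 0 + v 1 + K * v 1 * cos θ₁| ^ (-p) :=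
        integral_const_mul _ _
    _ ≤ C * K ^ (-p) * (C * max |v 0 + v 1| |K * v 1| ^ (-p)) := by
        gcongr
        exact setIntegral_abs_add_mul_cos_rpow_neg_le hp0 hp _ _
    _ ≤ C * K ^ (-p) * (C * 2) := by gcongr
    _ = 2 * C ^ 2 * K ^ (-p) := by ring

/-- Fix `p ∈ (0, 1/2)`. There exist `K₀ > 0` and `γ' ∈ (0, 1/2)` such that for all
`K ≥ K₀`, all `x ∈ 𝕋²`, and all unit vectors `v`, the average over
`(θ₁, θ₂) ∈ [0,2π)²` of `‖J(θ₂) J(θ₁) v‖^{-p}` is at most `γ'`. -/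
theorem stmt_2 (p : ℝ) (hp : 0 < p) (hp' : p < 1 / 2) :
    ∃ K₀ : ℝ, 0 < K₀ ∧ ∃ γ' : ℝ, 0 < γ' ∧ γ' < 1 / 2 ∧
      ∀ K : ℝ, K₀ ≤ K →
        ∀ _x : AddCircle (2 * π) × AddCircle (2 * π),
          ∀ v : Fin 2 → ℝ, (v 0) ^ 2 + (v 1) ^ 2 = 1 →
            (1 / (4 * π ^ 2)) *
                ∫ θ₁ in Set.Icc (0 : ℝ) (2 * π), ∫ θ₂ in Set.Icc (0 : ℝ) (2 * π),
                  (Real.sqrt ((((chirikovJac K θ₂ * chirikovJac K θ₁).mulVec v) 0) ^ 2 +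
                      (((chirikovJac K θ₂ * chirikovJac K θ₁).mulVec v) 1) ^ 2)) ^ (-p)
              ≤ γ' := by
  set C := 2 * sinHalfRpowIntegral (2 * p)
  refine ⟨max 2 ((8 * C ^ 2) ^ p⁻¹), lt_max_of_lt_left two_pos, 1 / 4, by norm_num, by norm_num,
    fun K hK _ v hv => ?_⟩
  have hK0 : 0 < K := lt_of_lt_of_le two_pos (le_of_max_le_left hK)
  have hKp : 8 * C ^ 2 ≤ K ^ p := calc
    8 * C ^ 2 = ((8 * C ^ 2) ^ p⁻¹) ^ p := (rpow_inv_rpow (by positivity) hp.ne').symm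
    _ ≤ K ^ p := rpow_le_rpow (by positivity) (le_of_max_le_right hK) hp.le
  have hX := setIntegral_setIntegral_rpow_neg_norm_chirikovJac_le hp hp' (le_of_max_le_left hK) hv
  have hπ : 1 / (4 * π ^ 2) ≤ 1 := by
    rw [div_le_one (by positivity)]
    nlinarith [pi_gt_three]
  simp_rw [← Matrix.mulVec_mulVec]
  refine (mul_le_of_le_one_left (integral_nonneg fun θ₁ => integral_nonneg fun θ₂ =>
    rpow_nonneg (sqrt_nonneg _) _) hπ).trans (hX.trans ?_)
  rw [rpow_neg hK0.le, ← div_eq_mul_inv, div_le_iff₀ (rpow_pos_of_pos hK0 p)]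
  linarith
end
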